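/- Let q = p^h and fix an integer e with 0 ≤ e ≤ h−1. Suppose one of the following conditions holds: (1) p is even; (2) p is odd, h/gcd(e,h) is odd, and (p^h−1)/2 is even; (3) p is odd, h/gcd(e,h) is even, and (p^{gcd(e,h)}+1) divides (p^h−1)/2. If, in addition, there exist α_1, α_2, α_3 ∈ F_q \ {0} with α_1^{p^e+1} + α_2^{p^e+1} + α_3^{p^e+1} = 0, then for every integer i ≥ 1 there exist β_1, β_2, …, β_{2i+1} ∈ F_q \ {0} such that β_1^{p^e+1} + β_2^{p^e+1} + ⋯ + β_{2i+1}^{p^e+1} = 0. -/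

import Mathlib

/-!
In characteristic 2, `c = 1` satisfies `c ^ (p ^ e + 1) = -1`. For odd `p` the group `F_q^*` is
cyclic of order `q - 1`, so its element `-1` of order 2 is an `m`-th power as soon as
`2 * gcd(m, q - 1) ∣ q - 1`. For `m = p ^ e + 1` and `d = gcd(e, h)`, the residue `x = p` modulo
`gcd(p ^ e + 1, p ^ h - 1)` satisfies `x ^ e = -1` and `x ^ h = 1`, which forces `x ^ d = 1` when
`h / d` is odd and `x ^ d = -1` when `h / d` is even; so this gcd divides `2`, resp. `p ^ d + 1`,
and each of the two odd conditions gives `2 * gcd ∣ q - 1`. Given `c ≠ 0` with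
`c ^ (p ^ e + 1) = -1`, appending `c` and `1` to a vanishing sum of nonzero `(p ^ e + 1)`-th powers
keeps it vanishing, and we start from `α₁, α₂, α₃`.
-/

open Finset

variable {F : Type*}

/-- The `e`-Galois dual of a linear code `C ⊆ F_q^n` (`q = p^h`):
`C^{⊥_e} = {x | ∀ c ∈ C, ∑ i, x i * (c i)^(p^e) = 0}`. -/
def galoisDual [Field F] (p e : ℕ) {n : ℕ} (C : Submodule F (Fin n → F)) :
    Submodule F (Fin n → F) where
  carrier := {x | ∀ c ∈ C, ∑ i, x i * c i ^ p ^ e = 0}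
  add_mem' := by
    intro a b ha hb c hc
    have h1 := ha c hc
    have h2 := hb c hc
    try simp only [Set.mem_ofPred_eq] at h1 h2 ⊢
    simp only [Pi.add_apply, add_mul, Finset.sum_add_distrib, h1, h2, add_zero]
  zero_mem' := by
    intro c hc
    simp
  smul_mem' := by
    intro r a ha c hc
    have h1 := ha c hc
    try simp only [Set.mem_ofPred_eq] at h1 ⊢
    simp only [Pi.smul_apply, smul_eq_mul, mul_assoc, ← Finset.mul_sum, h1, mul_zero]

/-- The `e`-Galois hull of `C`: `Hull_e(C) = C ∩ C^{⊥_e}`. -/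
def galoisHull [Field F] (p e : ℕ) {n : ℕ} (C : Submodule F (Fin n → F)) :
    Submodule F (Fin n → F) :=
  C ⊓ galoisDual p e C

/-- `G` is a generator matrix of `C`: its rows form a basis of `C`. -/
def IsGenMatrix [Field F] {n k : ℕ} (C : Submodule F (Fin n → F))
    (G : Matrix (Fin k) (Fin n) F) : Prop :=
  LinearIndependent F (fun i : Fin k => G i) ∧
    Submodule.span F (Set.range fun i : Fin k => G i) = C

/-- `d` is the minimum (Hamming) distance of the linear code `C`. -/
def IsMinDist [Field F] [DecidableEq F] {n : ℕ} (C : Submodule F (Fin n → F)) (d : ℕ) : Prop :=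
  (∃ c ∈ C, c ≠ 0 ∧ hammingNorm c = d) ∧ ∀ c ∈ C, c ≠ 0 → d ≤ hammingNorm c

section PowEqNegOne

variable {M : Type*} [Monoid M] [HasDistribNeg M] {x : M} {e h : ℕ}

theorem pow_gcd_eq_one_of_pow_eq_neg_one (hh : 0 < h) (hxe : x ^ e = -1) (hxh : x ^ h = 1)
    (hodd : Odd (h / e.gcd h)) : x ^ e.gcd h = 1 := by
  set d := e.gcd h
  have hd : 0 < d := Nat.gcd_pos_of_pos_right e hh
  have hcop : (2 * (e / d)).Coprime (h / d) :=
    Nat.Coprime.mul_left (Nat.coprime_two_left.2 hodd) (Nat.coprime_div_gcd_div_gcd hd)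
  have hy : (x ^ d) ^ (e / d) = -1 := by
    rw [← pow_mul, Nat.mul_div_cancel' (Nat.gcd_dvd_left e h), hxe]
  have h2a : (x ^ d) ^ (2 * (e / d)) = 1 := by rw [mul_comm, pow_mul, hy, neg_one_sq]
  have hb : (x ^ d) ^ (h / d) = 1 := by
    rw [← pow_mul, Nat.mul_div_cancel' (Nat.gcd_dvd_right e h), hxh]
  simpa [hcop] using pow_gcd_eq_one.2 ⟨h2a, hb⟩

theorem pow_gcd_eq_neg_one_of_pow_eq_neg_one (hh : 0 < h) (hxe : x ^ e = -1) (hxh : x ^ h = 1)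
    (heven : Even (h / e.gcd h)) : x ^ e.gcd h = -1 := by
  set d := e.gcd h
  have hd : 0 < d := Nat.gcd_pos_of_pos_right e hh
  obtain ⟨c, hc⟩ := heven
  have hcop : (e / d).Coprime (h / d) := Nat.coprime_div_gcd_div_gcd hd
  obtain ⟨k, hk⟩ : Odd (e / d) :=
    Nat.coprime_two_right.1 (hcop.coprime_dvd_right ⟨c, by omega⟩)
  have hy : (x ^ d) ^ (e / d) = -1 := by
    rw [← pow_mul, Nat.mul_div_cancel' (Nat.gcd_dvd_left e h), hxe]
  have hsq : (x ^ d) ^ 2 = 1 := by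
    have h2a : ((x ^ d) ^ 2) ^ (e / d) = 1 := by
      rw [← pow_mul, mul_comm, pow_mul, hy, neg_one_sq]
    have h2c : ((x ^ d) ^ 2) ^ c = 1 := by
      rw [← pow_mul, ← pow_mul, two_mul, ← hc, Nat.mul_div_cancel' (Nat.gcd_dvd_right e h),
        hxh]
    have hcop' : (e / d).Coprime c := hcop.coprime_dvd_right ⟨2, by omega⟩
    simpa [hcop'] using pow_gcd_eq_one.2 ⟨h2a, h2c⟩
  rwa [hk, pow_succ, pow_mul, hsq, one_pow, one_mul] at hy

end PowEqNegOne

theorem ZMod.natCast_pow_eq_neg_one {t p e : ℕ} (ht : t ∣ p ^ e + 1) :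
    (p : ZMod t) ^ e = -1 := by
  have := (ZMod.natCast_eq_zero_iff _ _).2 ht
  push_cast at this
  exact eq_neg_of_add_eq_zero_left this

theorem ZMod.natCast_pow_eq_one {t p h : ℕ} (hp : 0 < p) (ht : t ∣ p ^ h - 1) :
    (p : ZMod t) ^ h = 1 := by
  have := (ZMod.natCast_eq_zero_iff _ _).2 ht
  rw [Nat.cast_sub (Nat.one_le_pow _ _ hp)] at this
  push_cast at this
  exact sub_eq_zero.1 this

theorem Nat.gcd_pow_add_one_pow_sub_one_dvd_two {p e h : ℕ} (hp : 0 < p) (hh : 0 < h)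
    (hodd : Odd (h / e.gcd h)) : (p ^ e + 1).gcd (p ^ h - 1) ∣ 2 := by
  set t := (p ^ e + 1).gcd (p ^ h - 1)
  have hxe := ZMod.natCast_pow_eq_neg_one (Nat.gcd_dvd_left (p ^ e + 1) (p ^ h - 1))
  have hxh := ZMod.natCast_pow_eq_one hp (Nat.gcd_dvd_right (p ^ e + 1) (p ^ h - 1))
  have hxd := pow_gcd_eq_one_of_pow_eq_neg_one hh hxe hxh hodd
  have hneg : (-1 : ZMod t) = 1 := calc
    (-1 : ZMod t) = ((p : ZMod t) ^ e.gcd h) ^ (e / e.gcd h) := by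
      rw [← pow_mul, Nat.mul_div_cancel' (Nat.gcd_dvd_left e h), hxe]
    _ = 1 := by rw [hxd, one_pow]
  rw [← ZMod.natCast_eq_zero_iff, Nat.cast_two]
  linear_combination -hneg

theorem Nat.gcd_pow_add_one_pow_sub_one_dvd_pow_gcd_add_one {p e h : ℕ} (hp : 0 < p)
    (hh : 0 < h) (heven : Even (h / e.gcd h)) :
    (p ^ e + 1).gcd (p ^ h - 1) ∣ p ^ e.gcd h + 1 := by
  have hxe := ZMod.natCast_pow_eq_neg_one (Nat.gcd_dvd_left (p ^ e + 1) (p ^ h - 1))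
  have hxh := ZMod.natCast_pow_eq_one hp (Nat.gcd_dvd_right (p ^ e + 1) (p ^ h - 1))
  have hxd := pow_gcd_eq_neg_one_of_pow_eq_neg_one hh hxe hxh heven
  rw [← ZMod.natCast_eq_zero_iff]
  push_cast
  rw [hxd, neg_add_cancel]

theorem Nat.two_mul_gcd_pow_add_one_pow_sub_one_dvd {p e h : ℕ} (hp : Odd p) (hh : 0 < h)
    (hcase : (Odd (h / e.gcd h) ∧ Even ((p ^ h - 1) / 2)) ∨
      (Even (h / e.gcd h) ∧ (p ^ e.gcd h + 1) ∣ (p ^ h - 1) / 2)) :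
    2 * (p ^ e + 1).gcd (p ^ h - 1) ∣ p ^ h - 1 := by
  have h2 : 2 ∣ p ^ h - 1 := (Nat.Odd.sub_odd hp.pow odd_one).two_dvd
  refine (Nat.mul_dvd_mul_left 2 ?_).trans (Nat.mul_div_cancel' h2).dvd
  rcases hcase with ⟨hodd, hhalf⟩ | ⟨heven, hhalf⟩
  · exact (gcd_pow_add_one_pow_sub_one_dvd_two hp.pos hh hodd).trans hhalf.two_dvd
  · exact (gcd_pow_add_one_pow_sub_one_dvd_pow_gcd_add_one hp.pos hh heven).trans hhalf

theorem IsCyclic.exists_pow_eq_of_pow_card_div_gcd_eq_one {G : Type*} [CommGroup G] [IsCyclic G]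
    [Finite G] {m : ℕ} {x : G} (hx : x ^ (Nat.card G / (Nat.card G).gcd m) = 1) :
    ∃ y : G, y ^ m = x := by
  set k := Nat.card G / (Nat.card G).gcd m
  have hk : k ∣ Nat.card G := Nat.div_dvd_of_dvd (Nat.gcd_dvd_left _ _)
  have hle : (powMonoidHom m : G →* G).range ≤ (powMonoidHom k).ker := by
    rintro _ ⟨y, rfl⟩
    have hmk : m * k = Nat.card G * (m / (Nat.card G).gcd m) := by
      rw [← Nat.mul_div_assoc m (Nat.gcd_dvd_left _ _), mul_comm m,
        Nat.mul_div_assoc _ (Nat.gcd_dvd_right _ _)]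
    change (y ^ m) ^ k = 1
    rw [← pow_mul, hmk, pow_mul, pow_card_eq_one', one_pow]
  have hcard :
      Nat.card (powMonoidHom k : G →* G).ker ≤ Nat.card (powMonoidHom m : G →* G).range := by
    rw [IsCyclic.card_powMonoidHom_ker, IsCyclic.card_powMonoidHom_range, Nat.gcd_eq_right hk]
  have hx' : x ∈ (powMonoidHom k : G →* G).ker := hx
  rw [← Subgroup.eq_of_le_of_card_ge hle hcard] at hx'
  exact hx'

theorem FiniteField.exists_pow_eq_neg_one {K : Type*} [Field K] [Fintype K] {m : ℕ}
    (hm : 2 * m.gcd (Fintype.card K - 1) ∣ Fintype.card K - 1) :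
    ∃ c : K, c ≠ 0 ∧ c ^ m = -1 := by
  have hcard : Nat.card Kˣ = Fintype.card K - 1 := by
    rw [Nat.card_units, Nat.card_eq_fintype_card]
  obtain ⟨k, hk⟩ : 2 ∣ Nat.card Kˣ / (Nat.card Kˣ).gcd m := by
    rw [hcard, Nat.gcd_comm]
    exact Nat.dvd_div_of_mul_dvd (mul_comm 2 _ ▸ hm)
  obtain ⟨y, hy⟩ := IsCyclic.exists_pow_eq_of_pow_card_div_gcd_eq_one (m := m) (x := (-1 : Kˣ))
    (by rw [hk, pow_mul, neg_one_sq, one_pow])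
  exact ⟨y, y.ne_zero, by simpa using congrArg Units.val hy⟩

theorem exists_nonzero_sum_pow_eq_zero_add_two {R : Type*} [Ring R] [Nontrivial R] {m n : ℕ}
    {c : R} (hc : c ≠ 0) (hcm : c ^ m = -1)
    (hβ : ∃ β : Fin n → R, (∀ j, β j ≠ 0) ∧ ∑ j, β j ^ m = 0) :
    ∃ β : Fin (n + 2) → R, (∀ j, β j ≠ 0) ∧ ∑ j, β j ^ m = 0 := by
  obtain ⟨β, hβ0, hβs⟩ := hβ
  refine ⟨Fin.cons c (Fin.cons 1 β), Fin.cases hc (Fin.cases one_ne_zero hβ0), ?_⟩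
  simp [Fin.sum_univ_succ, hcm, hβs]

theorem exists_nonzero_sum_pow_eq_zero_add_two_mul {R : Type*} [Ring R] [Nontrivial R]
    {m n : ℕ} {c : R} (hc : c ≠ 0) (hcm : c ^ m = -1)
    (hβ : ∃ β : Fin n → R, (∀ j, β j ≠ 0) ∧ ∑ j, β j ^ m = 0) (k : ℕ) :
    ∃ β : Fin (n + 2 * k) → R, (∀ j, β j ≠ 0) ∧ ∑ j, β j ^ m = 0 := by
  induction k with
  | zero => exact hβ
  | succ k ih => exact exists_nonzero_sum_pow_eq_zero_add_two hc hcm ih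

theorem exists_odd_family_sum_pow_eq_zero_general
    (p h : ℕ) (hp : p.Prime) (hh : 0 < h)
    [Field F] [Fintype F] (hcard : Fintype.card F = p ^ h)
    (e : ℕ)
    (hcond : Even p ∨
      (Odd p ∧ Odd (h / Nat.gcd e h) ∧ Even ((p ^ h - 1) / 2)) ∨
      (Odd p ∧ Even (h / Nat.gcd e h) ∧ (p ^ Nat.gcd e h + 1) ∣ ((p ^ h - 1) / 2)))
    (α₁ α₂ α₃ : F) (hα₁ : α₁ ≠ 0) (hα₂ : α₂ ≠ 0) (hα₃ : α₃ ≠ 0)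
    (hsum : α₁ ^ (p ^ e + 1) + α₂ ^ (p ^ e + 1) + α₃ ^ (p ^ e + 1) = 0) :
    ∀ i : ℕ, 1 ≤ i → ∃ β : Fin (2 * i + 1) → F,
      (∀ j, β j ≠ 0) ∧ ∑ j, β j ^ (p ^ e + 1) = 0 := by
  obtain ⟨c, hc, hcm⟩ : ∃ c : F, c ≠ 0 ∧ c ^ (p ^ e + 1) = -1 := by
    rcases hcond with hpe | ⟨hpo, hcase⟩ | ⟨hpo, hcase⟩
    · have h2 : (2 : F) = 0 := by
        have hq : ((2 ^ h : ℕ) : F) = 0 := by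
          rw [← hp.even_iff.1 hpe, ← hcard, FiniteField.cast_card_eq_zero]
        push_cast at hq
        exact pow_eq_zero_iff hh.ne' |>.1 hq
      exact ⟨1, one_ne_zero, by linear_combination h2⟩
    all_goals
      refine FiniteField.exists_pow_eq_neg_one ?_
      rw [hcard]
    · exact Nat.two_mul_gcd_pow_add_one_pow_sub_one_dvd hpo hh (.inl hcase)
    · exact Nat.two_mul_gcd_pow_add_one_pow_sub_one_dvd hpo hh (.inr hcase)
  have h3 : ∃ β : Fin 3 → F, (∀ j, β j ≠ 0) ∧ ∑ j, β j ^ (p ^ e + 1) = 0 :=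
    ⟨![α₁, α₂, α₃], by simp [Fin.forall_fin_succ, hα₁, hα₂, hα₃],
      by simpa [Fin.sum_univ_three] using hsum⟩
  rintro i hi
  obtain ⟨k, rfl⟩ := Nat.exists_eq_add_of_le' hi
  rw [show 2 * (k + 1) + 1 = 3 + 2 * k by ring]
  exact exists_nonzero_sum_pow_eq_zero_add_two_mul hc hcm h3 k

/-- Theorem: under one of the conditions (1) `p` even; (2) `p` odd, `h/gcd(e,h)` odd and
`(p^h-1)/2` even; (3) `p` odd, `h/gcd(e,h)` even and `(p^{gcd(e,h)}+1) ∣ (p^h-1)/2`,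
if moreover `α₁^{p^e+1} + α₂^{p^e+1} + α₃^{p^e+1} = 0` for some nonzero `α₁,α₂,α₃`, then for
every `i ≥ 1` there exist `β₁,…,β_{2i+1} ∈ F_q^*` with `∑ β_j^{p^e+1} = 0`. -/
theorem exists_odd_family_sum_pow_eq_zero
    (p h : ℕ) (hp : p.Prime) (hh : 0 < h)
    [Field F] [Fintype F] (hcard : Fintype.card F = p ^ h)
    (e : ℕ) (he : e ≤ h - 1)
    (hcond : Even p ∨
      (Odd p ∧ Odd (h / Nat.gcd e h) ∧ Even ((p ^ h - 1) / 2)) ∨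
      (Odd p ∧ Even (h / Nat.gcd e h) ∧ (p ^ Nat.gcd e h + 1) ∣ ((p ^ h - 1) / 2)))
    (α₁ α₂ α₃ : F) (hα₁ : α₁ ≠ 0) (hα₂ : α₂ ≠ 0) (hα₃ : α₃ ≠ 0)
    (hsum : α₁ ^ (p ^ e + 1) + α₂ ^ (p ^ e + 1) + α₃ ^ (p ^ e + 1) = 0) :
    ∀ i : ℕ, 1 ≤ i → ∃ β : Fin (2 * i + 1) → F,
      (∀ j, β j ≠ 0) ∧ ∑ j, β j ^ (p ^ e + 1) = 0 :=
  exists_odd_family_sum_pow_eq_zero_general p h hp hh hcard e hcond α₁ α₂ α₃ hα₁ hα₂ hα₃ hsum
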